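/- arXiv:1205.4256 — 3 statements merged into one kernel-verified Lean document; each statement's English description precedes it below -/
import Mathlib

section
/- (Cauchy–Goursat for strict harmonic forms) If w = u + v·dxdy is strict harmonic (satisfies the Cauchy–Riemann equations, with u, v continuously differentiable) on a simply connected open set Ω ⊆ ℝ², then the valuation of w on every closed C¹ curve in Ω vanishes: ⟨w⟩_c = 0. -/
open Complex intervalIntegral

/-- partial derivative in the `x`-direction -/
noncomputable def px (f : ℝ × ℝ → ℝ) (p : ℝ × ℝ) : ℝ := fderiv ℝ f p (1, 0)

/-- partial derivative in the `y`-direction -/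
noncomputable def py (f : ℝ × ℝ → ℝ) (p : ℝ × ℝ) : ℝ := fderiv ℝ f p (0, 1)

/-- The valuation `⟨w⟩_c` of the even form `w = u + v·dxdy` on a curve `c`,
identified with a complex number via `dxdy ↔ i`:
`⟨w⟩_c = ∫_c (u dx − v dy) + i ∫_c (u dy + v dx)`. -/
noncomputable def valuation (u v : ℝ × ℝ → ℝ) (c : ℝ → ℝ × ℝ) : ℂ :=
  ((∫ t in (0:ℝ)..1, (u (c t) * (deriv c t).1 - v (c t) * (deriv c t).2)) : ℝ) +
    ((∫ t in (0:ℝ)..1, (u (c t) * (deriv c t).2 + v (c t) * (deriv c t).1)) : ℝ) * Complex.I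

/-!
Under `dxdy ↦ i` the form `w` becomes `f = u + i v`, which the Cauchy–Riemann equations make
holomorphic on the copy `s` of `Ω` in `ℂ`, and `⟨w⟩_c` becomes `∫_c f dz`. Since `s` is simply
connected, `c` contracts to a point through a homotopy `H` in `s`. Cut the square into cells so
small that `H` maps each into a disc inside `s`, where `f` has a primitive. Two such primitives
differ by a constant on the convex overlap of their discs, so the sum of the increments of the
primitives along a row of grid points does not depend on the row: on the first row it is `∫_c f dz`
by the fundamental theorem of calculus, on the last one (the constant loop) it is `0`.
-/

open Set Metric

/-- `P n m` stands for a primitive on the cell with lower-left vertex `z n m`; `hvert` and `hhor`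
say that adjacent cells assign the same increment to their common edge. -/
theorem sum_range_sub_eq_zero_of_grid {α E : Type*} [AddCommGroup E]
    (P : ℕ → ℕ → α → E) (z : ℕ → ℕ → α) (N : ℕ)
    (hvert : ∀ n < N, ∀ m < N, P n m (z (n + 1) (m + 1)) - P n m (z n (m + 1)) =
      P n (m + 1) (z (n + 1) (m + 1)) - P n (m + 1) (z n (m + 1)))
    (hhor : ∀ n < N, ∀ m < N, P n m (z (n + 1) (m + 1)) - P n m (z (n + 1) m) =
      P (n + 1) m (z (n + 1) (m + 1)) - P (n + 1) m (z (n + 1) m))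
    (hleft : ∀ n < N, z (n + 1) 0 = z n 0) (hright : ∀ n < N, z (n + 1) N = z n N)
    (htop : ∀ m < N, z N (m + 1) = z N m) :
    ∑ m ∈ Finset.range N, (P 0 m (z 0 (m + 1)) - P 0 m (z 0 m)) = 0 := by
  set R : ℕ → E := fun n ↦ ∑ m ∈ Finset.range N, (P n m (z n (m + 1)) - P n m (z n m))
  have hstep : ∀ n < N, R (n + 1) = R n := by
    intro n hn
    set e : ℕ → E := fun m ↦ P n m (z (n + 1) m) - P n m (z n m)
    have hcell : ∀ m ∈ Finset.range N,
        (P (n + 1) m (z (n + 1) (m + 1)) - P (n + 1) m (z (n + 1) m)) -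
          (P n m (z n (m + 1)) - P n m (z n m)) = e (m + 1) - e m := by
      intro m hm
      have hm := Finset.mem_range.1 hm
      simp only [e, ← hvert n hn m hm, ← hhor n hn m hm]
      abel
    rw [← sub_eq_zero, ← Finset.sum_sub_distrib, Finset.sum_congr rfl hcell,
      Finset.sum_range_sub]
    simp [e, hleft n hn, hright n hn]
  have hR : ∀ n ≤ N, R n = R 0 := by
    intro n hn
    induction n with
    | zero => rfl
    | succ k ih => rw [hstep k (by omega), ih (by omega)]
  change R 0 = 0
  rw [← hR N le_rfl]
  exact Finset.sum_eq_zero fun m hm ↦ by rw [htop m (Finset.mem_range.1 hm), sub_self]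

theorem IsOpen.sub_eq_sub_of_hasDerivAt {𝕜 G : Type*} [RCLike 𝕜] [NormedAddCommGroup G]
    [NormedSpace 𝕜 G] {U : Set 𝕜} (hU : IsOpen U) (hU' : IsPreconnected U) {f F F' : 𝕜 → G}
    (hF : ∀ z ∈ U, HasDerivAt F (f z) z) (hF' : ∀ z ∈ U, HasDerivAt F' (f z) z)
    {x y : 𝕜} (hx : x ∈ U) (hy : y ∈ U) : F y - F x = F' y - F' x := by
  obtain ⟨a, ha⟩ := hU.exists_eq_add_of_deriv_eq hU'
    (fun z hz ↦ (hF z hz).differentiableAt.differentiableWithinAt)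
    (fun z hz ↦ (hF' z hz).differentiableAt.differentiableWithinAt)
    (fun z hz ↦ (hF z hz).deriv.trans (hF' z hz).deriv.symm)
  rw [ha hx, ha hy, add_sub_add_right_eq_sub]

theorem exists_grid_mapsTo_ball {X : Type*} [PseudoMetricSpace X] {s : Set X} (hs : IsOpen s)
    {K : unitInterval × unitInterval → X} (hK : Continuous K) (hKs : ∀ q, K q ∈ s) :
    ∃ t : ℕ → unitInterval, t 0 = 0 ∧ Monotone t ∧ (∃ N, ∀ n ≥ N, t n = 1) ∧
      ∀ n m, ∃ c r, ball c r ⊆ s ∧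
        MapsTo K (Icc (t n) (t (n + 1)) ×ˢ Icc (t m) (t (m + 1))) (ball c r) := by
  obtain ⟨t, ht0, htm, htN, hcover⟩ :=
    exists_monotone_Icc_subset_open_cover_unitInterval_prod_self
      (c := fun B : {B : X × ℝ // ball B.1 B.2 ⊆ s} ↦ K ⁻¹' ball B.1.1 B.1.2)
      (fun _ ↦ isOpen_ball.preimage hK) fun q _ ↦ by
        obtain ⟨ε, hε, hball⟩ := Metric.isOpen_iff.1 hs (K q) (hKs q)
        exact mem_iUnion.2 ⟨⟨(K q, ε), hball⟩, mem_ball_self hε⟩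
  refine ⟨t, ht0, htm, htN, fun n m ↦ ?_⟩
  obtain ⟨⟨⟨c, r⟩, hB⟩, hsub⟩ := hcover n m
  exact ⟨c, r, hB, hsub⟩

theorem ContinuousOn.intervalIntegrable_comp_mul_deriv {f : ℂ → ℂ} {U : Set ℂ}
    (hf : ContinuousOn f U) {γ : ℝ → ℂ} (hγ : ContDiff ℝ 1 γ) {a b : ℝ}
    (hγU : MapsTo γ (uIcc a b) U) :
    IntervalIntegrable (fun t ↦ f (γ t) * deriv γ t) MeasureTheory.volume a b :=
  ((hf.comp hγ.continuous.continuousOn hγU).mul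
    (hγ.continuous_deriv le_rfl).continuousOn).intervalIntegrable

theorem integral_comp_mul_deriv_eq_sub {f F : ℂ → ℂ} {U : Set ℂ}
    (hF : ∀ z ∈ U, HasDerivAt F (f z) z) (hf : ContinuousOn f U) {γ : ℝ → ℂ}
    (hγ : ContDiff ℝ 1 γ) {a b : ℝ} (hγU : MapsTo γ (uIcc a b) U) :
    ∫ t in a..b, f (γ t) * deriv γ t = F (γ b) - F (γ a) :=
  integral_eq_sub_of_hasDerivAt
    (fun t ht ↦ (hF _ (hγU ht)).comp t (hγ.differentiable one_ne_zero t).hasDerivAt)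
    (hf.intervalIntegrable_comp_mul_deriv hγ hγU)

theorem integral_eq_sum_sub_of_hasDerivAt {f : ℂ → ℂ} {γ : ℝ → ℂ} (hγ : ContDiff ℝ 1 γ)
    {t : ℕ → ℝ} {N : ℕ} {U : ℕ → Set ℂ} {P : ℕ → ℂ → ℂ}
    (hP : ∀ m < N, ∀ z ∈ U m, HasDerivAt (P m) (f z) z) (hf : ∀ m < N, ContinuousOn f (U m))
    (hγU : ∀ m < N, MapsTo γ (uIcc (t m) (t (m + 1))) (U m)) :
    ∫ τ in t 0..t N, f (γ τ) * deriv γ τ =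
      ∑ m ∈ Finset.range N, (P m (γ (t (m + 1))) - P m (γ (t m))) := by
  rw [← intervalIntegral.sum_integral_adjacent_intervals fun m hm ↦
    (hf m hm).intervalIntegrable_comp_mul_deriv hγ (hγU m hm)]
  refine Finset.sum_congr rfl fun m hm ↦ ?_
  have hm := Finset.mem_range.1 hm
  exact integral_comp_mul_deriv_eq_sub (hP m hm) (hf m hm) hγ (hγU m hm)

theorem integral_eq_zero_of_homotopy_refl {f : ℂ → ℂ} {s : Set ℂ} (hs : IsOpen s)
    (hf : DifferentiableOn ℂ f s) {γ : ℝ → ℂ} (hγ : ContDiff ℝ 1 γ) {x : ℂ} {p : Path x x}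
    (hp : ∀ t : unitInterval, p t = γ t) (H : p.Homotopy (Path.refl x)) (hHs : ∀ q, H q ∈ s) :
    ∫ t in (0 : ℝ)..1, f (γ t) * deriv γ t = 0 := by
  obtain ⟨t, ht0, htm, ⟨N, htN⟩, hcell⟩ := exists_grid_mapsTo_ball hs H.continuous hHs
  choose c r hBs hHB using hcell
  choose P hP using fun n m ↦ (hf.mono (hBs n m)).isExactOn_ball
  set z : ℕ → ℕ → ℂ := fun n m ↦ H (t n, t m)
  have hends : ∀ n, t n ∈ Icc (t n) (t (n + 1)) ∧ t (n + 1) ∈ Icc (t n) (t (n + 1)) :=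
    fun n ↦ ⟨left_mem_Icc.2 (htm n.le_succ), right_mem_Icc.2 (htm n.le_succ)⟩
  have hcompat : ∀ {n m n' m' : ℕ} {a b : ℂ}, a ∈ ball (c n m) (r n m) →
      b ∈ ball (c n m) (r n m) → a ∈ ball (c n' m') (r n' m') → b ∈ ball (c n' m') (r n' m') →
      P n m b - P n m a = P n' m' b - P n' m' a := fun ha hb ha' hb' ↦
    (isOpen_ball.inter isOpen_ball).sub_eq_sub_of_hasDerivAt
      ((convex_ball _ _).inter (convex_ball _ _)).isPreconnected
      (fun w hw ↦ hP _ _ w hw.1) (fun w hw ↦ hP _ _ w hw.2) ⟨ha, ha'⟩ ⟨hb, hb'⟩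
  have hgrid := sum_range_sub_eq_zero_of_grid P z N
    (fun n _ m _ ↦ hcompat (hHB n m ⟨(hends n).1, (hends m).2⟩)
      (hHB n m ⟨(hends n).2, (hends m).2⟩) (hHB n (m + 1) ⟨(hends n).1, (hends (m + 1)).1⟩)
      (hHB n (m + 1) ⟨(hends n).2, (hends (m + 1)).1⟩))
    (fun n _ m _ ↦ hcompat (hHB n m ⟨(hends n).2, (hends m).1⟩)
      (hHB n m ⟨(hends n).2, (hends m).2⟩) (hHB (n + 1) m ⟨(hends (n + 1)).1, (hends m).1⟩)
      (hHB (n + 1) m ⟨(hends (n + 1)).1, (hends m).2⟩))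
    (fun n _ ↦ by simp only [z, ht0, H.source])
    (fun n _ ↦ by simp only [z, htN N le_rfl, H.target])
    (fun m _ ↦ by
      simp only [z, htN N le_rfl, H.apply_one, Path.coe_toContinuousMap, Path.refl_apply])
  have hγB : ∀ m, MapsTo γ (uIcc (t m : ℝ) (t (m + 1))) (ball (c 0 m) (r 0 m)) := by
    intro m τ hτ
    rw [uIcc_of_le (show (t m : ℝ) ≤ t (m + 1) from htm m.le_succ)] at hτ
    have hτI : τ ∈ unitInterval := ⟨(t m).2.1.trans hτ.1, hτ.2.trans (t (m + 1)).2.2⟩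
    rw [← hp ⟨τ, hτI⟩, ← Path.coe_toContinuousMap, ← H.apply_zero]
    exact hHB 0 m ⟨by simp [ht0], hτ⟩
  have hzγ : ∀ m, z 0 m = γ (t m) := fun m ↦ by
    simp only [z, ht0, H.apply_zero, Path.coe_toContinuousMap, hp]
  have hftc := integral_eq_sum_sub_of_hasDerivAt (t := fun m ↦ (t m : ℝ)) (N := N) hγ
    (fun m _ ↦ hP 0 m) (fun m _ ↦ hf.continuousOn.mono (hBs 0 m)) fun m _ ↦ hγB m
  simp only [← hzγ, hgrid, ht0, htN N le_rfl] at hftc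
  exact_mod_cast hftc

theorem integral_eq_zero_of_isSimplyConnected {f : ℂ → ℂ} {s : Set ℂ} (hs : IsOpen s)
    (hsc : IsSimplyConnected s) (hf : DifferentiableOn ℂ f s) {γ : ℝ → ℂ} (hγ : ContDiff ℝ 1 γ)
    (hγs : MapsTo γ (Icc 0 1) s) (hγ01 : γ 0 = γ 1) :
    ∫ t in (0 : ℝ)..1, f (γ t) * deriv γ t = 0 := by
  let p : Path (γ 0) (γ 0) :=
    { toFun := fun t ↦ γ t
      source' := rfl
      target' := hγ01.symm }
  obtain ⟨H, hHs⟩ := (isSimplyConnected_iff_exists_homotopy_refl_forall_mem.1 hsc).2 _ p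
    fun t ↦ hγs t.2
  exact integral_eq_zero_of_homotopy_refl hs hf hγ (fun _ ↦ rfl) H hHs

noncomputable def complexify (u v : ℝ × ℝ → ℝ) (z : ℂ) : ℂ :=
  equivRealProdCLM.symm (u (equivRealProdCLM z), v (equivRealProdCLM z))

theorem differentiableAt_complexify {u v : ℝ × ℝ → ℝ} {z : ℂ}
    (hu : DifferentiableAt ℝ u (equivRealProdCLM z))
    (hv : DifferentiableAt ℝ v (equivRealProdCLM z))
    (hCR : px u (equivRealProdCLM z) = py v (equivRealProdCLM z) ∧
      py u (equivRealProdCLM z) = -px v (equivRealProdCLM z)) :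
    DifferentiableAt ℂ (complexify u v) z := by
  have hF := equivRealProdCLM.symm.hasFDerivAt.comp z
    ((hu.hasFDerivAt.prodMk hv.hasFDerivAt).comp z equivRealProdCLM.hasFDerivAt)
  refine (hF.complexOfReal_hasFDerivAt ?_).differentiableAt
  simp only [px, py, equivRealProdCLM_apply] at hCR
  apply Complex.ext <;> simp [hCR.1, hCR.2]

theorem differentiableOn_complexify {u v : ℝ × ℝ → ℝ} {Ω : Set (ℝ × ℝ)} (hΩ : IsOpen Ω)
    (hu : DifferentiableOn ℝ u Ω) (hv : DifferentiableOn ℝ v Ω)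
    (hCR : ∀ p ∈ Ω, px u p = py v p ∧ py u p = -px v p) :
    DifferentiableOn ℂ (complexify u v) (equivRealProdCLM ⁻¹' Ω) := fun _ hz ↦
  (differentiableAt_complexify (hu.differentiableAt (hΩ.mem_nhds hz))
    (hv.differentiableAt (hΩ.mem_nhds hz)) (hCR _ hz)).differentiableWithinAt

theorem valuation_eq_integral {u v : ℝ × ℝ → ℝ} {c : ℝ → ℝ × ℝ} (hc : Differentiable ℝ c)
    (hint : IntervalIntegrable (fun t ↦ complexify u v (equivRealProdCLM.symm (c t)) *
      deriv (equivRealProdCLM.symm ∘ c) t) MeasureTheory.volume 0 1) :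
    valuation u v c = ∫ t in (0 : ℝ)..1,
      complexify u v (equivRealProdCLM.symm (c t)) * deriv (equivRealProdCLM.symm ∘ c) t := by
  have hderiv : ∀ t, deriv (equivRealProdCLM.symm ∘ c) t = equivRealProdCLM.symm (deriv c t) :=
    fun t ↦ (equivRealProdCLM.symm.hasFDerivAt.comp_hasDerivAt t (hc t).hasDerivAt).deriv
  rw [← re_add_im (∫ t in (0 : ℝ)..1, _), ← RCLike.re_to_complex, ← RCLike.im_to_complex,
    ← intervalIntegral_re hint, ← intervalIntegral_im hint]
  simp [valuation, complexify, hderiv]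

/-- Cauchy–Goursat theorem for strict harmonic even forms: if `w = u + v·dxdy`
satisfies the Cauchy–Riemann equations on a simply connected open set `Ω` (with
`u, v` continuously differentiable), then the valuation of `w` on every closed `C¹`
curve in `Ω` vanishes. -/
theorem cauchy_goursat_strict_harmonic
    (Ω : Set (ℝ × ℝ)) (hΩ : IsOpen Ω) (hsc : SimplyConnectedSpace Ω)
    (u v : ℝ × ℝ → ℝ) (hu : ContDiffOn ℝ 1 u Ω) (hv : ContDiffOn ℝ 1 v Ω)
    (hCR : ∀ p ∈ Ω, px u p = py v p ∧ py u p = -px v p) :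
    ∀ c : ℝ → ℝ × ℝ, ContDiff ℝ 1 c → (∀ t ∈ Set.Icc (0:ℝ) 1, c t ∈ Ω) →
      c 0 = c 1 → valuation u v c = 0 := by
  intro c hc hcΩ hc01
  have hs : IsOpen (equivRealProdCLM ⁻¹' Ω) := hΩ.preimage equivRealProdCLM.continuous
  have hssc : IsSimplyConnected (equivRealProdCLM ⁻¹' Ω) :=
    equivRealProdCLM.toHomeomorph.isSimplyConnected_preimage.2 hsc
  have hf := differentiableOn_complexify hΩ (hu.differentiableOn one_ne_zero)
    (hv.differentiableOn one_ne_zero) hCR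
  have hγ : ContDiff ℝ 1 (equivRealProdCLM.symm ∘ c) := equivRealProdCLM.symm.contDiff.comp hc
  have hγs : MapsTo (equivRealProdCLM.symm ∘ c) (Icc 0 1) (equivRealProdCLM ⁻¹' Ω) :=
    fun t ht ↦ by simpa using hcΩ t ht
  rw [valuation_eq_integral (hc.differentiable one_ne_zero)
    (hf.continuousOn.intervalIntegrable_comp_mul_deriv hγ (by rwa [uIcc_of_le zero_le_one]))]
  exact integral_eq_zero_of_isSimplyConnected hs hssc hf hγ hγs (by simp [hc01])
end

section
/- (Cauchy integral formula in valuation form) Let f = u + v·dxdy be strict harmonic on an open set containing the closed disc bounded by a positively oriented circle C, and let z₀ be the center of C. Then ⟨f(z)/(z − z₀)⟩_C = 2π·dxdy·f(z₀), equivalently f(z₀) = (2π·dxdy)^{−1}·⟨f(z)/(z − z₀)⟩_C. -/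
open Complex Real Metric

/-- Cauchy integral formula in valuation form: if `f = u + v·dxdy` is strict
harmonic (equivalently, under `dxdy ↔ i`, the complex function `f` is holomorphic)
on an open set containing the closed disc bounded by the positively oriented circle
`C` of radius `r` centered at `z₀`, then
`⟨f(z)/(z − z₀)⟩_C = ∮_C f(z)/(z − z₀) dz = 2π·dxdy·f(z₀) = 2πi·f(z₀)`,
equivalently `f(z₀) = (2πi)⁻¹ ⟨f(z)/(z − z₀)⟩_C`. -/
theorem cauchy_integral_formula_valuation
    (f : ℂ → ℂ) (Ω : Set ℂ) (hΩ : IsOpen Ω) (hf : DifferentiableOn ℂ f Ω)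
    (z₀ : ℂ) (r : ℝ) (hr : 0 < r) (hball : closedBall z₀ r ⊆ Ω) :
    (∮ z in C(z₀, r), f z / (z - z₀)) = 2 * π * Complex.I * f z₀ ∧
      f z₀ = (2 * π * Complex.I)⁻¹ * ∮ z in C(z₀, r), f z / (z - z₀) := by
  have hd : DiffContOnCl ℂ f (ball z₀ r) := by
    refine DifferentiableOn.diffContOnCl ?_
    exact hf.mono ((closure_ball_subset_closedBall).trans hball)
  have hz : z₀ ∈ ball z₀ r := mem_ball_self hr
  have key := hd.circleIntegral_sub_inv_smul hz
  have : (∮ z in C(z₀, r), f z / (z - z₀)) = ∮ z in C(z₀, r), (z - z₀)⁻¹ • f z := by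
    refine circleIntegral.integral_congr hr.le fun z _ => ?_
    simp [div_eq_inv_mul, smul_eq_mul]
  rw [this, key]
  have hne : (2 * (π:ℂ) * Complex.I) ≠ 0 := by
    simp [Real.pi_ne_zero, Complex.I_ne_zero]
  rw [smul_eq_mul]
  exact ⟨rfl, (inv_mul_cancel_left₀ hne (f z₀)).symm⟩
end

section
/- (Cauchy formula for derivatives, valuation form) Let f be strict harmonic on an open set containing the closed disc bounded by a positively oriented circle C centered at z. Then for every n ≥ 0, ∂ⁿf(z)/∂xⁿ = (n!/(2π·dxdy))·⟨f(ζ)/(ζ − z)^{n+1}⟩_C, where ∂/∂x is the co-valuation operator. -/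
open Complex Real Metric

/-- Cauchy formula for derivatives, valuation form: if `f` is strict harmonic
(i.e., under `dxdy ↔ i`, holomorphic) on an open set containing the closed disc
bounded by the positively oriented circle `C` of radius `r` centered at `z`, then
for every `n ≥ 0` the `n`-th co-valuation derivative `∂ⁿf/∂xⁿ` (the `n`-th complex
derivative) satisfies
`∂ⁿf(z)/∂xⁿ = (n!/(2πi)) ⟨f(ζ)/(ζ − z)^{n+1}⟩_C = (n!/(2πi)) ∮_C f(ζ)/(ζ − z)^{n+1} dζ`. -/
theorem cauchy_formula_for_derivatives
    (f : ℂ → ℂ) (Ω : Set ℂ) (hΩ : IsOpen Ω) (hf : DifferentiableOn ℂ f Ω)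
    (z : ℂ) (r : ℝ) (hr : 0 < r) (hball : closedBall z r ⊆ Ω) (n : ℕ) :
    iteratedDeriv n f z =
      (n.factorial : ℂ) / (2 * π * Complex.I) *
        ∮ ζ in C(z, r), f ζ / (ζ - z) ^ (n + 1) := by
  lift r to NNReal using hr.le
  have hr' : (0 : NNReal) < r := by exact_mod_cast hr
  have h : HasFPowerSeriesOnBall f (cauchyPowerSeries f z r) z r :=
    ((hf.mono hball).hasFPowerSeriesOnBall hr')
  have key := h.factorial_smul (1 : ℂ) n
  rw [cauchyPowerSeries_apply] at key
  have hiter : iteratedFDeriv ℂ n f z (fun _ ↦ (1 : ℂ)) = iteratedDeriv n f z := by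
    rw [iteratedDeriv_eq_iteratedFDeriv]
  rw [hiter] at key
  rw [← key]
  have hint : (∮ ζ in C(z, (r:ℝ)), (1 / (ζ - z)) ^ n • (ζ - z)⁻¹ • f ζ)
      = ∮ ζ in C(z, (r:ℝ)), f ζ / (ζ - z) ^ (n + 1) := by
    apply circleIntegral.integral_congr hr.le
    intro ζ _
    simp only [smul_eq_mul, one_div, pow_succ, div_pow, one_pow, div_eq_mul_inv, mul_inv]
    ring
  rw [hint]
  simp only [smul_eq_mul, nsmul_eq_mul]
  ring
end
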